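/- Fix a real α with 0 < α < 1/2 and a real τ > 0. For an integer d ≥ 1, a real T > 0 and a real φ ∈ [1, d], define r_d(T, φ) = ( Σ_{k=1}^{⌊φ⌋} (k^{−α} − φ^{−α})² + Σ_{k=⌊φ⌋+1}^{d} φ^{−2α}/(4T²) ) / Σ_{k=1}^{d} k^{−2α}. Then: (i) for every x ∈ (0, 1], lim_{d→∞} r_d(τ, d·x) = f_τ(x), where f_τ(x) = (1−2α)·[ (1 + 1/(1−2α) − 2/(1−α) − 1/(4τ²))·x^{1−2α} + x^{−2α}/(4τ²) ]; (ii) if 4τ² ≤ (1−α)/(2α²), then the minimum of f_τ over (0, 1] is attained at x = 1 with value 2α²/(1−α); (iii) if 4τ² > (1−α)/(2α²), then the minimum of f_τ over (0, 1] is attained uniquely at x* = (1 − 1/(2α) + 4τ²·α/(1−α))^{−1}, with value (1 − 1/(2α) + 4τ²·α/(1−α))^{2α}/(4τ²). -/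

import Mathlib

/-!
With `m = ⌊φ⌋` and `S_s(n) = ∑_{k ≤ n} k^{-s}`, the numerator of the loss expands to
`S_{2α}(m) - 2 φ^{-α} S_α(m) + m φ^{-2α} + (d - m) φ^{-2α} / (4T²)`.
Comparing with `∫ t^{-s}` gives `S_s(n) = n^{1-s}/(1-s) + O(1)` for `0 ≤ s < 1`, so after dividing
numerator and denominator by `d^{1-2α}` and using `m/d → x` every piece converges.

The limit is `(1-2α) (a x^{1-2α} + b x^{-2α})` with `b = 1/(4τ²) > 0`. Its derivative has the
sign of `(1-2α) a x - 2α b`, which changes sign at most once, at `x* = 2α b / ((1-2α) a)`; so the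
limit decreases up to `x*` and increases after it, and the minimum on `(0, 1]` is at `min x* 1`.
At `x*` the limit equals `b x*^{-2α}`.
-/

open Real Filter Topology

section PowerSums

variable {s : ℝ}

lemma integral_one_rpow_neg (hs : s < 1) (y : ℝ) :
    ∫ t in (1 : ℝ)..y, t ^ (-s) = (y ^ (1 - s) - 1) / (1 - s) := by
  rw [integral_rpow (Or.inl (by linarith)), one_rpow, neg_add_eq_sub]

lemma antitoneOn_rpow_neg_Icc (hs : 0 ≤ s) (n : ℕ) :
    AntitoneOn (fun t : ℝ => t ^ (-s)) (Set.Icc ((1 : ℕ) : ℝ) n) :=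
  fun _ ha _ _ hab => rpow_le_rpow_of_nonpos ((by norm_num : (0 : ℝ) < (1 : ℕ)).trans_le ha.1) hab
    (neg_nonpos.mpr hs)

lemma le_sum_Icc_rpow_neg (hs0 : 0 ≤ s) (hs1 : s < 1) {n : ℕ} (hn : 1 ≤ n) :
    ((n : ℝ) ^ (1 - s) - 1) / (1 - s) ≤ ∑ k ∈ Finset.Icc 1 n, (k : ℝ) ^ (-s) := by
  have hint := (antitoneOn_rpow_neg_Icc hs0 n).integral_le_sum_Ico (a := 1) hn
  rw [Nat.cast_one, integral_one_rpow_neg hs1] at hint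
  exact hint.trans <| Finset.sum_le_sum_of_subset_of_nonneg Finset.Ico_subset_Icc_self
    fun k _ _ => rpow_nonneg k.cast_nonneg _

lemma sum_Icc_rpow_neg_le (hs0 : 0 ≤ s) (hs1 : s < 1) {n : ℕ} (hn : 1 ≤ n) :
    ∑ k ∈ Finset.Icc 1 n, (k : ℝ) ^ (-s) ≤ 1 + ((n : ℝ) ^ (1 - s) - 1) / (1 - s) := by
  have hint := (antitoneOn_rpow_neg_Icc hs0 n).sum_le_integral_Ico (a := 1) hn
  rw [Nat.cast_one, integral_one_rpow_neg hs1, Finset.sum_Ico_add' (fun k : ℕ => (k : ℝ) ^ (-s))]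
    at hint
  rw [← Finset.Ico_add_one_right_eq_Icc, Finset.sum_eq_sum_Ico_succ_bot (by omega)]
  simpa using hint

lemma tendsto_sum_Icc_rpow_neg_div (hs0 : 0 ≤ s) (hs1 : s < 1) :
    Tendsto (fun n : ℕ => (∑ k ∈ Finset.Icc 1 n, (k : ℝ) ^ (-s)) / (n : ℝ) ^ (1 - s))
      atTop (𝓝 (1 / (1 - s))) := by
  have hs : 0 < 1 - s := by linarith
  have hinv : Tendsto (fun n : ℕ => ((n : ℝ) ^ (1 - s))⁻¹) atTop (𝓝 0) :=
    ((tendsto_rpow_atTop hs).comp tendsto_natCast_atTop_atTop).inv_tendsto_atTop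
  have hlower : Tendsto (fun n : ℕ => 1 / (1 - s) - 1 / (1 - s) * ((n : ℝ) ^ (1 - s))⁻¹)
      atTop (𝓝 (1 / (1 - s))) := by
    simpa using tendsto_const_nhds.sub (hinv.const_mul (1 / (1 - s)))
  have hupper : Tendsto (fun n : ℕ => 1 / (1 - s) + (1 - 1 / (1 - s)) * ((n : ℝ) ^ (1 - s))⁻¹)
      atTop (𝓝 (1 / (1 - s))) := by
    simpa using tendsto_const_nhds.add (hinv.const_mul (1 - 1 / (1 - s)))
  refine tendsto_of_tendsto_of_tendsto_of_le_of_le' hlower hupper ?_ ?_ <;>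
    filter_upwards [eventually_ge_atTop 1] with n hn
  · have hpos : 0 < (n : ℝ) ^ (1 - s) := rpow_pos_of_pos (by exact_mod_cast hn) _
    rw [le_div_iff₀ hpos]
    refine Eq.trans_le ?_ (le_sum_Icc_rpow_neg hs0 hs1 hn)
    field_simp
  · have hpos : 0 < (n : ℝ) ^ (1 - s) := rpow_pos_of_pos (by exact_mod_cast hn) _
    rw [div_le_iff₀ hpos]
    refine (sum_Icc_rpow_neg_le hs0 hs1 hn).trans_eq ?_
    field_simp
    ring

lemma tendsto_natFloor_mul_div_natCast {x : ℝ} (hx : 0 ≤ x) :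
    Tendsto (fun d : ℕ => (⌊(d : ℝ) * x⌋₊ : ℝ) / d) atTop (𝓝 x) :=
  ((tendsto_nat_floor_mul_div_atTop hx).comp tendsto_natCast_atTop_atTop).congr fun d => by
    simp [mul_comm]

lemma tendsto_sum_Icc_floor_rpow_neg_div (hs0 : 0 ≤ s) (hs1 : s < 1) {x : ℝ} (hx : 0 < x) :
    Tendsto (fun d : ℕ => (∑ k ∈ Finset.Icc 1 ⌊(d : ℝ) * x⌋₊, (k : ℝ) ^ (-s)) / (d : ℝ) ^ (1 - s))
      atTop (𝓝 (1 / (1 - s) * x ^ (1 - s))) := by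
  have hfloor_top : Tendsto (fun d : ℕ => ⌊(d : ℝ) * x⌋₊) atTop atTop :=
    tendsto_nat_floor_atTop.comp (tendsto_natCast_atTop_atTop.atTop_mul_const hx)
  have hratio := ((continuousAt_rpow_const x (1 - s) (Or.inl hx.ne')).tendsto).comp
    (tendsto_natFloor_mul_div_natCast hx.le)
  refine ((tendsto_sum_Icc_rpow_neg_div hs0 hs1).comp hfloor_top |>.mul hratio).congr' ?_
  filter_upwards [hfloor_top.eventually_ge_atTop 1, eventually_ge_atTop 1] with d hm hd
  have hm' : (0 : ℝ) < ⌊(d : ℝ) * x⌋₊ := by exact_mod_cast hm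
  have hd' : (0 : ℝ) < d := by exact_mod_cast hd
  simp only [Function.comp_apply]
  rw [div_rpow hm'.le hd'.le]
  field_simp [(rpow_pos_of_pos hm' (1 - s)).ne']

end PowerSums

lemma rpow_neg_two_mul_eq_sq {y : ℝ} (hy : 0 ≤ y) (α : ℝ) : y ^ (-(2 * α)) = (y ^ (-α)) ^ 2 := by
  rw [← rpow_mul_natCast hy, Nat.cast_ofNat, neg_mul, mul_comm]

lemma rpow_one_sub_eq_mul {y : ℝ} (hy : 0 < y) (α : ℝ) : y ^ (1 - α) = y * y ^ (-α) := by
  rw [sub_eq_add_neg, rpow_add hy, rpow_one]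

lemma sum_Icc_sq_rpow_neg_sub (α : ℝ) {φ : ℝ} (hφ : 0 ≤ φ) (n : ℕ) :
    ∑ k ∈ Finset.Icc 1 n, ((k : ℝ) ^ (-α) - φ ^ (-α)) ^ 2 =
      ∑ k ∈ Finset.Icc 1 n, (k : ℝ) ^ (-(2 * α))
        - 2 * φ ^ (-α) * ∑ k ∈ Finset.Icc 1 n, (k : ℝ) ^ (-α) + n * φ ^ (-(2 * α)) := by
  simp only [rpow_neg_two_mul_eq_sq hφ, rpow_neg_two_mul_eq_sq (Nat.cast_nonneg _), sub_sq,
    Finset.sum_add_distrib, Finset.sum_sub_distrib, Finset.mul_sum, Finset.sum_const,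
    Nat.card_Icc, Nat.add_sub_cancel, nsmul_eq_mul]
  congr 2
  exact Finset.sum_congr rfl fun k _ => by ring

noncomputable def signDescentLoss (α : ℝ) (d : ℕ) (T φ : ℝ) : ℝ :=
  ((∑ k ∈ Finset.Icc 1 ⌊φ⌋₊, ((k : ℝ) ^ (-α) - φ ^ (-α)) ^ 2) +
    ∑ _k ∈ Finset.Icc (⌊φ⌋₊ + 1) d, φ ^ (-(2 * α)) / (4 * T ^ 2)) /
  (∑ k ∈ Finset.Icc 1 d, (k : ℝ) ^ (-(2 * α)))

noncomputable def limitLoss (α τ x : ℝ) : ℝ :=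
  (1 - 2 * α) * ((1 + 1 / (1 - 2 * α) - 2 / (1 - α) - 1 / (4 * τ ^ 2)) *
    x ^ (1 - 2 * α) + x ^ (-(2 * α)) / (4 * τ ^ 2))

lemma signDescentLoss_mul_eq (α T : ℝ) {x : ℝ} (hx0 : 0 < x) (hx1 : x ≤ 1) {d : ℕ} (hd : 1 ≤ d) :
    let m := ⌊(d : ℝ) * x⌋₊
    signDescentLoss α d T (d * x) =
      ((∑ k ∈ Finset.Icc 1 m, (k : ℝ) ^ (-(2 * α))) / (d : ℝ) ^ (1 - 2 * α)
        - 2 * x ^ (-α) * ((∑ k ∈ Finset.Icc 1 m, (k : ℝ) ^ (-α)) / (d : ℝ) ^ (1 - α))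
        + m / d * x ^ (-(2 * α)) + (1 - m / d) * (x ^ (-(2 * α)) / (4 * T ^ 2))) /
      ((∑ k ∈ Finset.Icc 1 d, (k : ℝ) ^ (-(2 * α))) / (d : ℝ) ^ (1 - 2 * α)) := by
  intro m
  have hd0 : (0 : ℝ) < d := by exact_mod_cast hd
  have hm : m ≤ d := Nat.floor_le_of_le (by nlinarith)
  have htail : ∑ k ∈ Finset.Icc (m + 1) d, ((d : ℝ) * x) ^ (-(2 * α)) / (4 * T ^ 2) =
      (d - m) * (((d : ℝ) * x) ^ (-(2 * α)) / (4 * T ^ 2)) := by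
    rw [Finset.sum_const, Nat.card_Icc, nsmul_eq_mul, Nat.add_sub_add_right, Nat.cast_sub hm]
  rw [signDescentLoss, sum_Icc_sq_rpow_neg_sub α (by positivity), htail, ← div_div_div_cancel_right₀
    (rpow_pos_of_pos hd0 (1 - 2 * α)).ne']
  congr 1
  simp only [mul_rpow hd0.le hx0.le, rpow_neg_two_mul_eq_sq hd0.le, rpow_neg_two_mul_eq_sq hx0.le,
    rpow_one_sub_eq_mul hd0]
  have : (d : ℝ) ^ (-α) ≠ 0 := (rpow_pos_of_pos hd0 _).ne'
  field_simp
  ring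

lemma tendsto_signDescentLoss_mul {α : ℝ} (hα0 : 0 ≤ α) (hα1 : α < 1 / 2) (T : ℝ) {x : ℝ}
    (hx0 : 0 < x) (hx1 : x ≤ 1) :
    Tendsto (fun d : ℕ => signDescentLoss α d T (d * x)) atTop (𝓝 (limitLoss α T x)) := by
  have h2α : 0 < 1 - 2 * α := by linarith
  have hP := tendsto_sum_Icc_floor_rpow_neg_div (s := 2 * α) (by positivity) (by linarith) hx0
  have hQ := tendsto_sum_Icc_floor_rpow_neg_div (s := α) hα0 (by linarith) hx0
  have hH := tendsto_sum_Icc_rpow_neg_div (s := 2 * α) (by positivity) (by linarith)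
  have hm := tendsto_natFloor_mul_div_natCast hx0.le
  have hlim := ((hP.sub (hQ.const_mul (2 * x ^ (-α)))).add (hm.mul_const (x ^ (-(2 * α))))).add
    (((tendsto_const_nhds (x := (1 : ℝ))).sub hm).mul_const (x ^ (-(2 * α)) / (4 * T ^ 2)))
    |>.div hH (one_div_pos.mpr h2α).ne'
  refine (hlim.congr' ?_).trans_eq ?_
  · filter_upwards [eventually_ge_atTop 1] with d hd
    exact (signDescentLoss_mul_eq α T hx0 hx1 hd).symm
  · have h1α : 1 - α ≠ 0 := by linarith
    rw [limitLoss]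
    congr 1
    simp only [rpow_neg_two_mul_eq_sq hx0.le, rpow_one_sub_eq_mul hx0]
    field_simp
    ring

section RpowCombo

variable {s a b : ℝ}

noncomputable def rpowCombo (s a b x : ℝ) : ℝ := a * x ^ (1 - s) + b * x ^ (-s)

lemma hasDerivAt_rpowCombo {x : ℝ} (hx : 0 < x) :
    HasDerivAt (rpowCombo s a b) (x ^ (-s - 1) * ((1 - s) * a * x - s * b)) x := by
  have h := (((hasDerivAt_rpow_const (p := 1 - s) (Or.inl hx.ne')).const_mul a).add
    ((hasDerivAt_rpow_const (p := -s) (Or.inl hx.ne')).const_mul b))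
  refine h.congr_deriv ?_
  rw [show 1 - s - 1 = -s - 1 + 1 by ring, rpow_add hx, rpow_one]
  ring

lemma continuousOn_rpowCombo {S : Set ℝ} (hS : S ⊆ Set.Ioi 0) : ContinuousOn (rpowCombo s a b) S :=
  fun _ hx => (hasDerivAt_rpowCombo (hS hx)).continuousAt.continuousWithinAt

lemma strictAntiOn_rpowCombo (hs : 0 < s) (hb : 0 < b) {x₀ : ℝ} (h : (1 - s) * a * x₀ ≤ s * b) :
    StrictAntiOn (rpowCombo s a b) (Set.Ioc 0 x₀) := by
  refine strictAntiOn_of_deriv_neg (convex_Ioc 0 x₀)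
    (continuousOn_rpowCombo Set.Ioc_subset_Ioi_self) fun x hx => ?_
  rw [interior_Ioc] at hx
  rw [(hasDerivAt_rpowCombo hx.1).deriv]
  have hlt : (1 - s) * a * x < s * b := by
    rcases le_or_gt ((1 - s) * a) 0 with ha | ha
    · nlinarith [hx.1]
    · nlinarith [hx.2]
  exact mul_neg_of_pos_of_neg (rpow_pos_of_pos hx.1 _) (by linarith)

lemma strictMonoOn_rpowCombo (hs : 0 < s) (hb : 0 < b) {x₀ : ℝ} (hx₀ : 0 < x₀)
    (h : s * b ≤ (1 - s) * a * x₀) : StrictMonoOn (rpowCombo s a b) (Set.Ici x₀) := by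
  refine strictMonoOn_of_deriv_pos (convex_Ici x₀)
    (continuousOn_rpowCombo fun x hx => hx₀.trans_le hx) fun x hx => ?_
  rw [interior_Ici] at hx
  have hx0 : 0 < x := hx₀.trans hx
  rw [(hasDerivAt_rpowCombo hx0).deriv]
  have ha : 0 < (1 - s) * a := pos_of_mul_pos_left ((mul_pos hs hb).trans_le h) hx₀.le
  have hlt : s * b < (1 - s) * a * x := h.trans_lt (by nlinarith [hx.out])
  exact mul_pos (rpow_pos_of_pos hx0 _) (by linarith)

lemma rpowCombo_lt_of_ne (hs : 0 < s) (hb : 0 < b) {x₀ : ℝ} (hx₀ : 0 < x₀)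
    (h : (1 - s) * a * x₀ = s * b) {x : ℝ} (hx : 0 < x) (hne : x ≠ x₀) :
    rpowCombo s a b x₀ < rpowCombo s a b x := by
  rcases hne.lt_or_gt with hlt | hgt
  · exact strictAntiOn_rpowCombo hs hb h.le ⟨hx, hlt.le⟩ ⟨hx₀, le_rfl⟩ hlt
  · exact strictMonoOn_rpowCombo hs hb hx₀ h.ge Set.self_mem_Ici hgt.le hgt

lemma one_sub_mul_rpowCombo_eq {x₀ : ℝ} (hx₀ : 0 < x₀) (h : (1 - s) * a * x₀ = s * b) :
    (1 - s) * rpowCombo s a b x₀ = b * x₀ ^ (-s) := by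
  rw [rpowCombo, rpow_one_sub_eq_mul hx₀]
  linear_combination x₀ ^ (-s) * h

end RpowCombo

section LimitLoss

variable {α τ : ℝ}

/-- The minimiser of `limitLoss α τ` on `(0, 1]` is `(limitLossCrit α τ)⁻¹` when this exceeds
one. -/
noncomputable def limitLossCrit (α τ : ℝ) : ℝ := 1 - 1 / (2 * α) + 4 * τ ^ 2 * α / (1 - α)

lemma limitLoss_eq_rpowCombo (x : ℝ) :
    limitLoss α τ x = (1 - 2 * α) * rpowCombo (2 * α)
      (1 + 1 / (1 - 2 * α) - 2 / (1 - α) - 1 / (4 * τ ^ 2)) (1 / (4 * τ ^ 2)) x := by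
  rw [limitLoss, rpowCombo]
  ring

lemma limitLoss_coeff_eq_crit (hα0 : 0 < α) (hα1 : α < 1 / 2) (hτ : τ ≠ 0) :
    (1 - 2 * α) * (1 + 1 / (1 - 2 * α) - 2 / (1 - α) - 1 / (4 * τ ^ 2)) =
      2 * α * (1 / (4 * τ ^ 2)) * limitLossCrit α τ := by
  have h1 : 1 - 2 * α ≠ 0 := by linarith
  have h2 : 1 - α ≠ 0 := by linarith
  rw [limitLossCrit]
  field_simp
  ring

lemma one_lt_limitLossCrit_iff (hα0 : 0 < α) (hα1 : α < 1 / 2) :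
    1 < limitLossCrit α τ ↔ (1 - α) / (2 * α ^ 2) < 4 * τ ^ 2 := by
  have h1α : 0 < 1 - α := by linarith
  have hsub : limitLossCrit α τ - 1 = (4 * τ ^ 2 * (2 * α ^ 2) - (1 - α)) / (2 * α * (1 - α)) := by
    rw [limitLossCrit]
    field_simp
    ring
  rw [← sub_pos, hsub, div_pos_iff_of_pos_right (by positivity), sub_pos,
    div_lt_iff₀ (by positivity)]

lemma limitLoss_one (hα1 : α < 1 / 2) : limitLoss α τ 1 = 2 * α ^ 2 / (1 - α) := by
  have h1 : 1 - 2 * α ≠ 0 := by linarith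
  have h2 : 1 - α ≠ 0 := by linarith
  rw [limitLoss, one_rpow, one_rpow]
  field_simp
  ring

lemma limitLoss_one_le (hα0 : 0 < α) (hα1 : α < 1 / 2) (hτ : τ ≠ 0) (hc : limitLossCrit α τ ≤ 1)
    {x : ℝ} (hx : x ∈ Set.Ioc 0 1) : limitLoss α τ 1 ≤ limitLoss α τ x := by
  have hb : 0 < 1 / (4 * τ ^ 2) := by positivity
  have hcrit : (1 - 2 * α) * (1 + 1 / (1 - 2 * α) - 2 / (1 - α) - 1 / (4 * τ ^ 2)) * 1 ≤
      2 * α * (1 / (4 * τ ^ 2)) := by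
    rw [limitLoss_coeff_eq_crit hα0 hα1 hτ, mul_one]
    exact mul_le_of_le_one_right (by positivity) hc
  rw [limitLoss_eq_rpowCombo, limitLoss_eq_rpowCombo]
  refine mul_le_mul_of_nonneg_left ?_ (by linarith)
  exact (strictAntiOn_rpowCombo (by positivity) hb hcrit).antitoneOn hx ⟨one_pos, le_rfl⟩ hx.2

lemma limitLossCrit_inv_critical (hα0 : 0 < α) (hα1 : α < 1 / 2) (hτ : τ ≠ 0)
    (hc : 0 < limitLossCrit α τ) :
    (1 - 2 * α) * (1 + 1 / (1 - 2 * α) - 2 / (1 - α) - 1 / (4 * τ ^ 2)) * (limitLossCrit α τ)⁻¹ =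
      2 * α * (1 / (4 * τ ^ 2)) := by
  rw [limitLoss_coeff_eq_crit hα0 hα1 hτ, mul_assoc, mul_inv_cancel₀ hc.ne', mul_one]

lemma limitLoss_crit_inv_lt (hα0 : 0 < α) (hα1 : α < 1 / 2) (hτ : τ ≠ 0)
    (hc : 0 < limitLossCrit α τ) {x : ℝ} (hx : 0 < x) (hne : x ≠ (limitLossCrit α τ)⁻¹) :
    limitLoss α τ (limitLossCrit α τ)⁻¹ < limitLoss α τ x := by
  rw [limitLoss_eq_rpowCombo, limitLoss_eq_rpowCombo]
  exact mul_lt_mul_of_pos_left (rpowCombo_lt_of_ne (by positivity) (by positivity) (inv_pos.mpr hc)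
    (limitLossCrit_inv_critical hα0 hα1 hτ hc) hx hne) (by linarith)

lemma limitLoss_crit_inv (hα0 : 0 < α) (hα1 : α < 1 / 2) (hτ : τ ≠ 0) (hc : 0 < limitLossCrit α τ) :
    limitLoss α τ (limitLossCrit α τ)⁻¹ = limitLossCrit α τ ^ (2 * α) / (4 * τ ^ 2) := by
  rw [limitLoss_eq_rpowCombo, one_sub_mul_rpowCombo_eq (inv_pos.mpr hc)
    (limitLossCrit_inv_critical hα0 hα1 hτ hc), inv_rpow hc.le, rpow_neg hc.le, inv_inv]
  ring

end LimitLoss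

theorem stmt15 (α τ : ℝ) (hα0 : 0 < α) (hα1 : α < 1/2) (hτ : 0 < τ) :
    let r : ℕ → ℝ → ℝ → ℝ := fun d T φ =>
      ((∑ k ∈ Finset.Icc 1 ⌊φ⌋₊, ((k : ℝ) ^ (-α) - φ ^ (-α)) ^ 2) +
        ∑ k ∈ Finset.Icc (⌊φ⌋₊ + 1) d, φ ^ (-(2 * α)) / (4 * T ^ 2)) /
      (∑ k ∈ Finset.Icc 1 d, (k : ℝ) ^ (-(2 * α)))
    let f : ℝ → ℝ := fun x =>
      (1 - 2 * α) * ((1 + 1 / (1 - 2 * α) - 2 / (1 - α) - 1 / (4 * τ ^ 2)) *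
          x ^ (1 - 2 * α) + x ^ (-(2 * α)) / (4 * τ ^ 2))
    (∀ x ∈ Set.Ioc (0 : ℝ) 1,
      Tendsto (fun d : ℕ => r d τ ((d : ℝ) * x)) atTop (nhds (f x))) ∧
    (4 * τ ^ 2 ≤ (1 - α) / (2 * α ^ 2) →
      (∀ x ∈ Set.Ioc (0 : ℝ) 1, f 1 ≤ f x) ∧ f 1 = 2 * α ^ 2 / (1 - α)) ∧
    ((1 - α) / (2 * α ^ 2) < 4 * τ ^ 2 →
      let xstar : ℝ := (1 - 1 / (2 * α) + 4 * τ ^ 2 * α / (1 - α))⁻¹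
      xstar ∈ Set.Ioc (0 : ℝ) 1 ∧
      (∀ x ∈ Set.Ioc (0 : ℝ) 1, f xstar ≤ f x) ∧
      (∀ x ∈ Set.Ioc (0 : ℝ) 1, f x = f xstar → x = xstar) ∧
      f xstar = (1 - 1 / (2 * α) + 4 * τ ^ 2 * α / (1 - α)) ^ (2 * α) / (4 * τ ^ 2)) := by
  intro r f
  have hcrit := one_lt_limitLossCrit_iff (τ := τ) hα0 hα1
  refine ⟨fun x hx => tendsto_signDescentLoss_mul hα0.le hα1 τ hx.1 hx.2,
    fun h => ⟨fun x hx => limitLoss_one_le hα0 hα1 hτ.ne' (not_lt.mp (mt hcrit.mp h.not_gt)) hx,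
      limitLoss_one hα1⟩, fun h => ?_⟩
  intro xstar
  have hc : 1 < limitLossCrit α τ := hcrit.mpr h
  have hc0 : 0 < limitLossCrit α τ := one_pos.trans hc
  have hlt := fun x (hx : x ∈ Set.Ioc (0 : ℝ) 1) => limitLoss_crit_inv_lt hα0 hα1 hτ.ne' hc0 hx.1
  refine ⟨⟨inv_pos.mpr hc0, inv_le_one_of_one_le₀ hc.le⟩, fun x hx => ?_,
    fun x hx hfx => by_contra fun hne => (hlt x hx hne).ne' hfx,
    limitLoss_crit_inv hα0 hα1 hτ.ne' hc0⟩
  rcases eq_or_ne x xstar with rfl | hne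
  · exact le_rfl
  · exact (hlt x hx hne).le
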